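/- arXiv:1301.4309 — 2 statements merged into one kernel-verified Lean document; each statement's English description precedes it below -/
import Mathlib

section
/- Let m ≥ 1 and let x, y be nonzero vectors of ℝ^{m+1} with q_{1,m}(x) = q_{1,m}(y) = 0, x₀ > 0 and y₀ > 0 (two future-pointing null vectors). Then ⟨x | y⟩ ≤ 0, and ⟨x | y⟩ = 0 if and only if y = λx for some λ > 0. -/
/-- The Minkowski quadratic form `q_{1,m}(x) = -x₀² + x₁² + ⋯ + x_m²` on
`ℝ × ℝᵐ` (first coordinate `x₀`). -/
def qMink (m : ℕ) (x : ℝ × (Fin m → ℝ)) : ℝ :=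
  -(x.1 ^ 2) + ∑ i, (x.2 i) ^ 2

/-- The symmetric bilinear form associated to `q_{1,m}`. -/
def bMink (m : ℕ) (x y : ℝ × (Fin m → ℝ)) : ℝ :=
  -(x.1 * y.1) + ∑ i, x.2 i * y.2 i

/-!
Write a vector as `(t, u)` with `u` in Euclidean space. A future null vector has `‖u‖ = t`, so
`⟨x | y⟩ = ⟪u, v⟫ - ‖u‖ ‖v‖ ≤ 0` by Cauchy–Schwarz, with equality exactly when `u` and `v` are
positively proportional; since the time components are then `‖u‖` and `‖v‖`, so are `x` and `y`.
-/

section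

variable {m : ℕ}

def spatialPart (x : ℝ × (Fin m → ℝ)) : EuclideanSpace ℝ (Fin m) :=
  WithLp.toLp 2 x.2

lemma inner_spatialPart (x y : ℝ × (Fin m → ℝ)) :
    inner ℝ (spatialPart x) (spatialPart y) = ∑ i, x.2 i * y.2 i := by
  simp only [spatialPart, PiLp.inner_apply, RCLike.inner_apply, conj_trivial, mul_comm]

lemma bMink_eq_inner_sub (x y : ℝ × (Fin m → ℝ)) :
    bMink m x y = inner ℝ (spatialPart x) (spatialPart y) - x.1 * y.1 := by
  rw [inner_spatialPart, bMink]
  ring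

lemma bMink_self (x : ℝ × (Fin m → ℝ)) : bMink m x x = qMink m x := by
  simp only [bMink, qMink, sq]

lemma bMink_smul_right (x y : ℝ × (Fin m → ℝ)) (c : ℝ) :
    bMink m x (c • y) = c * bMink m x y := by
  simp only [bMink, Prod.smul_fst, Prod.smul_snd, Pi.smul_apply, smul_eq_mul, mul_left_comm _ c,
    ← Finset.mul_sum]
  ring

lemma qMink_eq_norm_sq_sub (x : ℝ × (Fin m → ℝ)) :
    qMink m x = ‖spatialPart x‖ ^ 2 - x.1 ^ 2 := by
  rw [← bMink_self, bMink_eq_inner_sub, real_inner_self_eq_norm_sq, sq x.1]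

lemma norm_spatialPart_le_of_qMink_nonpos {x : ℝ × (Fin m → ℝ)} (hq : qMink m x ≤ 0)
    (ht : 0 ≤ x.1) : ‖spatialPart x‖ ≤ x.1 := by
  rw [qMink_eq_norm_sq_sub, sub_nonpos] at hq
  exact (pow_le_pow_iff_left₀ (norm_nonneg _) ht two_ne_zero).mp hq

lemma norm_spatialPart_of_qMink_eq_zero {x : ℝ × (Fin m → ℝ)} (hq : qMink m x = 0)
    (ht : 0 ≤ x.1) : ‖spatialPart x‖ = x.1 := by
  rw [qMink_eq_norm_sq_sub, sub_eq_zero] at hq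
  exact (sq_eq_sq₀ (norm_nonneg _) ht).mp hq

lemma bMink_nonpos {x y : ℝ × (Fin m → ℝ)} (hx : qMink m x ≤ 0) (hy : qMink m y ≤ 0)
    (hxt : 0 ≤ x.1) (hyt : 0 ≤ y.1) : bMink m x y ≤ 0 := by
  rw [bMink_eq_inner_sub, sub_nonpos]
  calc inner ℝ (spatialPart x) (spatialPart y)
      ≤ ‖spatialPart x‖ * ‖spatialPart y‖ := real_inner_le_norm _ _
    _ ≤ x.1 * y.1 := mul_le_mul (norm_spatialPart_le_of_qMink_nonpos hx hxt)
        (norm_spatialPart_le_of_qMink_nonpos hy hyt) (norm_nonneg _) hxt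

lemma exists_pos_smul_of_bMink_eq_zero {x y : ℝ × (Fin m → ℝ)} (hx : qMink m x = 0)
    (hy : qMink m y = 0) (hxt : 0 < x.1) (hyt : 0 < y.1) (hxy : bMink m x y = 0) :
    ∃ l : ℝ, 0 < l ∧ y = l • x := by
  have hnx := norm_spatialPart_of_qMink_eq_zero hx hxt.le
  have hny := norm_spatialPart_of_qMink_eq_zero hy hyt.le
  rw [bMink_eq_inner_sub, sub_eq_zero, ← hnx, ← hny, inner_eq_norm_mul_iff_real, hnx, hny] at hxy
  have hsp : y.1 • x.2 = x.1 • y.2 := congrArg WithLp.ofLp hxy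
  refine ⟨y.1 / x.1, div_pos hyt hxt, Prod.ext ?_ ?_⟩
  · simp only [Prod.smul_fst, smul_eq_mul, div_mul_cancel₀ _ hxt.ne']
  · rw [Prod.smul_snd, div_eq_inv_mul, mul_smul, hsp, inv_smul_smul₀ hxt.ne']
end

theorem stmt12_general (m : ℕ) (x y : ℝ × (Fin m → ℝ))
    (hx : qMink m x = 0) (hy : qMink m y = 0)
    (hx1 : 0 < x.1) (hy1 : 0 < y.1) :
    bMink m x y ≤ 0 ∧ (bMink m x y = 0 ↔ ∃ l : ℝ, 0 < l ∧ y = l • x) := by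
  refine ⟨bMink_nonpos hx.le hy.le hx1.le hy1.le,
    exists_pos_smul_of_bMink_eq_zero hx hy hx1 hy1, ?_⟩
  rintro ⟨l, -, rfl⟩
  rw [bMink_smul_right, bMink_self, hx, mul_zero]

/-- For two future-pointing null vectors `x, y` in Minkowski space one has
`⟨x | y⟩ ≤ 0`, with equality if and only if `y` is a positive multiple of `x`. -/
theorem stmt12 (m : ℕ) (hm : 1 ≤ m) (x y : ℝ × (Fin m → ℝ))
    (hx0 : x ≠ 0) (hy0 : y ≠ 0)
    (hx : qMink m x = 0) (hy : qMink m y = 0)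
    (hx1 : 0 < x.1) (hy1 : 0 < y.1) :
    bMink m x y ≤ 0 ∧ (bMink m x y = 0 ↔ ∃ l : ℝ, 0 < l ∧ y = l • x) :=
  stmt12_general m x y hx hy hx1 hy1
end

section
/- Let x⁺, y⁺, x⁻, y⁻ ∈ ℝ^{n+2} (n ≥ 2) be vectors with q_{2,n}(x⁺) = q_{2,n}(y⁺) = q_{2,n}(x⁻) = q_{2,n}(y⁻) = 0, ⟨x⁻ | x⁺⟩ = ⟨x⁻ | y⁺⟩ = ⟨y⁻ | x⁺⟩ = ⟨y⁻ | y⁺⟩ = 0, ⟨x⁻ | y⁻⟩ < 0 and ⟨x⁺ | y⁺⟩ < 0 (representatives of the vertices of a crown). Then x⁺, y⁺, x⁻, y⁻ are linearly independent, and the restriction of q_{2,n} to their 4-dimensional span V is a nondegenerate quadratic form of signature (2,2): V admits an orthogonal basis e₁, e₂, e₃, e₄ with q_{2,n}(e₁) = q_{2,n}(e₂) = −1 and q_{2,n}(e₃) = q_{2,n}(e₄) = 1. -/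
/-- The symmetric bilinear form associated to `q_{2,n}` on `ℝ × ℝ × ℝⁿ`
(coordinates `(u, v, x₁, …, xₙ)`). -/
def bilin (n : ℕ) (x y : ℝ × ℝ × (Fin n → ℝ)) : ℝ :=
  -(x.1 * y.1) - x.2.1 * y.2.1 + ∑ i, x.2.2 i * y.2.2 i

/-- The quadratic form `q_{2,n}(u,v,x₁,…,xₙ) = -u² - v² + x₁² + ⋯ + xₙ²`. -/
def quad (n : ℕ) (x : ℝ × ℝ × (Fin n → ℝ)) : ℝ := bilin n x x

/-!
A pair of isotropic vectors `x, y` with `⟨x|y⟩ < 0` is a hyperbolic pair: `x + y` and `x - y`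
are orthogonal with `q(x ± y) = ±2⟨x|y⟩`, so after rescaling by `√(-2⟨x|y⟩)` they have
`q = -1` and `q = 1`, and they span the same plane as `x, y`. The planes of `x⁺, y⁺` and of
`x⁻, y⁻` are orthogonal, so the four rescaled vectors form an orthogonal basis of `V` of
signature `(2,2)`. Being orthogonal and anisotropic they are linearly independent, hence so
are the four vectors `x⁺, y⁺, x⁻, y⁻` spanning the same space.
-/

theorem Matrix.range_vecCons_four {α : Type*} (a b c d : α) :
    Set.range ![a, b, c, d] = {a, b, c, d} := by
  rw [Matrix.range_cons, Matrix.range_cons, Matrix.range_cons, Matrix.range_cons,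
    Matrix.range_empty, Set.union_empty, Set.singleton_union, Set.singleton_union,
    Set.singleton_union]

theorem linearIndependent_of_span_range_eq {K V ι : Type*} [DivisionRing K] [AddCommGroup V]
    [Module K V] [Fintype ι] {v w : ι → V} (hv : LinearIndependent K v)
    (h : Submodule.span K (Set.range v) = Submodule.span K (Set.range w)) :
    LinearIndependent K w := by
  rw [linearIndependent_iff_card_eq_finrank_span, Set.finrank, ← h]
  exact (finrank_span_eq_card hv).symm

namespace LinearMap.BilinForm

variable {M : Type*} [AddCommGroup M] [Module ℝ M] {B : LinearMap.BilinForm ℝ M}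

theorem apply_eq_zero_of_mem_span_pair {x y z w u v : M} (hu : u ∈ Submodule.span ℝ {x, y})
    (hv : v ∈ Submodule.span ℝ {z, w}) (hxz : B x z = 0) (hxw : B x w = 0) (hyz : B y z = 0)
    (hyw : B y w = 0) : B u v = 0 := by
  obtain ⟨a, b, rfl⟩ := Submodule.mem_span_pair.mp hu
  obtain ⟨c, d, rfl⟩ := Submodule.mem_span_pair.mp hv
  simp [hxz, hxw, hyz, hyw]

variable (B) (x y : M)

noncomputable def hyperbolicScale : ℝ := √(-(2 * B x y))

noncomputable def hyperbolicSum : M := (hyperbolicScale B x y)⁻¹ • (x + y)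

noncomputable def hyperbolicDiff : M := (hyperbolicScale B x y)⁻¹ • (x - y)

variable {B x y}

theorem hyperbolicSum_mem_span : hyperbolicSum B x y ∈ Submodule.span ℝ {x, y} :=
  Submodule.mem_span_pair.mpr ⟨_, _, (smul_add _ x y).symm⟩

theorem hyperbolicDiff_mem_span : hyperbolicDiff B x y ∈ Submodule.span ℝ {x, y} :=
  Submodule.mem_span_pair.mpr
    ⟨(hyperbolicScale B x y)⁻¹, -(hyperbolicScale B x y)⁻¹, by rw [hyperbolicDiff]; module⟩

theorem hyperbolicScale_mul_self (hxy : B x y < 0) :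
    hyperbolicScale B x y * hyperbolicScale B x y = -(2 * B x y) :=
  Real.mul_self_sqrt (by linarith)

theorem hyperbolicScale_ne_zero (hxy : B x y < 0) : hyperbolicScale B x y ≠ 0 :=
  (Real.sqrt_pos.mpr (by linarith)).ne'

theorem hyperbolicSum_self (hB : B.IsSymm) (hx : B x x = 0) (hy : B y y = 0) (hxy : B x y < 0) :
    B (hyperbolicSum B x y) (hyperbolicSum B x y) = -1 := by
  have hs := hyperbolicScale_mul_self hxy
  have hs0 := hyperbolicScale_ne_zero hxy
  simp only [hyperbolicSum, map_smul, map_add, LinearMap.smul_apply, LinearMap.add_apply,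
    smul_eq_mul, hx, hy, hB.eq y x]
  field_simp
  linear_combination hs

theorem hyperbolicDiff_self (hB : B.IsSymm) (hx : B x x = 0) (hy : B y y = 0) (hxy : B x y < 0) :
    B (hyperbolicDiff B x y) (hyperbolicDiff B x y) = 1 := by
  have hs := hyperbolicScale_mul_self hxy
  have hs0 := hyperbolicScale_ne_zero hxy
  simp only [hyperbolicDiff, map_smul, map_sub, LinearMap.smul_apply, LinearMap.sub_apply,
    smul_eq_mul, hx, hy, hB.eq y x]
  field_simp
  linear_combination -hs

theorem hyperbolicSum_diff (hB : B.IsSymm) (hx : B x x = 0) (hy : B y y = 0) :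
    B (hyperbolicSum B x y) (hyperbolicDiff B x y) = 0 := by
  simp [hyperbolicSum, hyperbolicDiff, hx, hy, hB.eq y x]

theorem span_hyperbolicSum_diff (hxy : B x y < 0) :
    Submodule.span ℝ {hyperbolicSum B x y, hyperbolicDiff B x y} = Submodule.span ℝ {x, y} := by
  have hs0 := hyperbolicScale_ne_zero hxy
  unfold hyperbolicSum hyperbolicDiff
  set s := hyperbolicScale B x y
  apply le_antisymm <;> rw [Submodule.span_le, Set.insert_subset_iff, Set.singleton_subset_iff] <;>
    simp only [SetLike.mem_coe, Submodule.mem_span_pair]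
  · exact ⟨⟨s⁻¹, s⁻¹, by module⟩, ⟨s⁻¹, -s⁻¹, by module⟩⟩
  · refine ⟨⟨s / 2, s / 2, ?_⟩, ⟨s / 2, -(s / 2), ?_⟩⟩ <;> match_scalars <;> field_simp <;> norm_num

end LinearMap.BilinForm

open LinearMap.BilinForm

def bilinForm (n : ℕ) : LinearMap.BilinForm ℝ (ℝ × ℝ × (Fin n → ℝ)) :=
  LinearMap.mk₂ ℝ (bilin n)
    (fun x y z => by simp only [bilin, Prod.fst_add, Prod.snd_add, Pi.add_apply, add_mul,
      Finset.sum_add_distrib]; ring)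
    (fun c x y => by simp only [bilin, Prod.smul_fst, Prod.smul_snd, Pi.smul_apply, smul_eq_mul,
      mul_assoc, ← Finset.mul_sum]; ring)
    (fun x y z => by simp only [bilin, Prod.fst_add, Prod.snd_add, Pi.add_apply, mul_add,
      Finset.sum_add_distrib]; ring)
    (fun c x y => by simp only [bilin, Prod.smul_fst, Prod.smul_snd, Pi.smul_apply, smul_eq_mul,
      mul_left_comm _ c, ← Finset.mul_sum]; ring)

theorem bilinForm_isSymm (n : ℕ) : (bilinForm n).IsSymm :=
  LinearMap.BilinForm.isSymm_def.mpr fun x y => by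
    simp only [bilinForm, LinearMap.mk₂_apply, bilin, mul_comm]

theorem stmt14_general (n : ℕ)
    (xp yp xm ym : ℝ × ℝ × (Fin n → ℝ))
    (hxp : quad n xp = 0) (hyp : quad n yp = 0)
    (hxm : quad n xm = 0) (hym : quad n ym = 0)
    (h1 : bilin n xm xp = 0) (h2 : bilin n xm yp = 0)
    (h3 : bilin n ym xp = 0) (h4 : bilin n ym yp = 0)
    (h5 : bilin n xm ym < 0) (h6 : bilin n xp yp < 0) :
    LinearIndependent ℝ ![xp, yp, xm, ym] ∧
    ∃ e : Fin 4 → ℝ × ℝ × (Fin n → ℝ),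
      Submodule.span ℝ (Set.range e) =
        Submodule.span ℝ ({xp, yp, xm, ym} : Set (ℝ × ℝ × (Fin n → ℝ))) ∧
      (∀ i j, i ≠ j → bilin n (e i) (e j) = 0) ∧
      quad n (e 0) = -1 ∧ quad n (e 1) = -1 ∧
      quad n (e 2) = 1 ∧ quad n (e 3) = 1 := by
  set B := bilinForm n
  have hB : B.IsSymm := bilinForm_isSymm n
  let e := ![hyperbolicSum B xp yp, hyperbolicSum B xm ym, hyperbolicDiff B xp yp,
    hyperbolicDiff B xm ym]
  have hp : B xp yp < 0 := h6
  have hm : B xm ym < 0 := h5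
  have hspan : Submodule.span ℝ (Set.range e) = Submodule.span ℝ {xp, yp, xm, ym} := by
    have hrange : Set.range e = {hyperbolicSum B xp yp, hyperbolicDiff B xp yp} ∪
        {hyperbolicSum B xm ym, hyperbolicDiff B xm ym} := by
      rw [Matrix.range_vecCons_four, Set.insert_union, Set.singleton_union,
        Set.insert_comm (hyperbolicSum B xm ym)]
    rw [hrange, Submodule.span_union, span_hyperbolicSum_diff hp, span_hyperbolicSum_diff hm,
      ← Submodule.span_union, Set.insert_union, Set.singleton_union]
  have hcross {u v} (hu : u ∈ Submodule.span ℝ {xm, ym}) (hv : v ∈ Submodule.span ℝ {xp, yp}) :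
      B u v = 0 :=
    apply_eq_zero_of_mem_span_pair hu hv h1 h2 h3 h4
  have hortho : B.iIsOrtho e := by
    have h10 : B (e 1) (e 0) = 0 := hcross hyperbolicSum_mem_span hyperbolicSum_mem_span
    have h12 : B (e 1) (e 2) = 0 := hcross hyperbolicSum_mem_span hyperbolicDiff_mem_span
    have h30 : B (e 3) (e 0) = 0 := hcross hyperbolicDiff_mem_span hyperbolicSum_mem_span
    have h32 : B (e 3) (e 2) = 0 := hcross hyperbolicDiff_mem_span hyperbolicDiff_mem_span
    have h02 : B (e 0) (e 2) = 0 := hyperbolicSum_diff hB hxp hyp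
    have h13 : B (e 1) (e 3) = 0 := hyperbolicSum_diff hB hxm hym
    intro i j hij
    fin_cases i <;> fin_cases j <;>
      first | exact absurd rfl hij | assumption | exact hB.eq_iff.mp ‹_›
  have hnorms : B (e 0) (e 0) = -1 ∧ B (e 1) (e 1) = -1 ∧ B (e 2) (e 2) = 1 ∧ B (e 3) (e 3) = 1 :=
    ⟨hyperbolicSum_self hB hxp hyp hp, hyperbolicSum_self hB hxm hym hm,
      hyperbolicDiff_self hB hxp hyp hp, hyperbolicDiff_self hB hxm hym hm⟩
  have hind : LinearIndependent ℝ e := linearIndependent_of_iIsOrtho hortho fun i => by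
    fin_cases i <;> simp [hnorms]
  refine ⟨linearIndependent_of_span_range_eq hind ?_, e, hspan, hortho, hnorms⟩
  rw [hspan, Matrix.range_vecCons_four]

/-- Representatives of the vertices of a crown are linearly independent, and
`q_{2,n}` restricted to their span is nondegenerate of signature `(2,2)`:
the span admits an orthogonal basis `e₁, e₂, e₃, e₄` with
`q(e₁) = q(e₂) = −1` and `q(e₃) = q(e₄) = 1`. -/
theorem stmt14 (n : ℕ) (hn : 2 ≤ n)
    (xp yp xm ym : ℝ × ℝ × (Fin n → ℝ))
    (hxp : quad n xp = 0) (hyp : quad n yp = 0)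
    (hxm : quad n xm = 0) (hym : quad n ym = 0)
    (h1 : bilin n xm xp = 0) (h2 : bilin n xm yp = 0)
    (h3 : bilin n ym xp = 0) (h4 : bilin n ym yp = 0)
    (h5 : bilin n xm ym < 0) (h6 : bilin n xp yp < 0) :
    LinearIndependent ℝ ![xp, yp, xm, ym] ∧
    ∃ e : Fin 4 → ℝ × ℝ × (Fin n → ℝ),
      Submodule.span ℝ (Set.range e) =
        Submodule.span ℝ ({xp, yp, xm, ym} : Set (ℝ × ℝ × (Fin n → ℝ))) ∧
      (∀ i j, i ≠ j → bilin n (e i) (e j) = 0) ∧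
      quad n (e 0) = -1 ∧ quad n (e 1) = -1 ∧
      quad n (e 2) = 1 ∧ quad n (e 3) = 1 :=
  stmt14_general n xp yp xm ym hxp hyp hxm hym h1 h2 h3 h4 h5 h6
end
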